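/- Let P ∈ ℕ and for each j ∈ {1,…,P} let γ_j > 0, ε_j > 0 and η_j > 0 be given, with V_j = η_j/ε_j, and let C > 0. For B ⊆ {1,…,P} with B ≠ {1,…,P} define α(B) = (C − Σ_{j∈B} γ_j ε_j)/(Σ_{j∉B} γ_j). Suppose B has at least two non-members, α(B) > 0, ε_j ≥ α(B) for every j ∈ B (i.e. all Lagrange multipliers associated with the active constraints in B are non-negative), and j' ∉ B satisfies η_{j'}/α(B) > V_{j'} (equivalently, ε_{j'} > α(B)). Then ε_j ≥ α(B ∪ {j'}) for every j ∈ B ∪ {j'}; that is, the Lagrange multipliers associated with the active constraints remain non-negative after adding j' to the working set. -/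

import Mathlib

/-!
Write `α(B) = N / D`. Adding `j' ∉ B` to the working set removes the term `γ_{j'} ε_{j'}` from
the numerator and the weight `γ_{j'}` from the denominator; since `ε_{j'} > α(B)` this lowers the
ratio, so `α(B ∪ {j'}) < α(B) ≤ ε_j` for `j ∈ B`, and `α(B ∪ {j'}) < α(B) < ε_{j'}`. The
denominator stays positive because `B` has a second non-member.
-/

/-- The common allocation factor `α(B) = (C − Σ_{j∈B} γ_j ε_j)/(Σ_{j∉B} γ_j)`
for the non-actively constrained portfolios, given working set `B`. -/
noncomputable def alphaFactor {P : ℕ} (γ ε : Fin P → ℝ) (C : ℝ) (B : Finset (Fin P)) : ℝ :=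
  (C - ∑ j ∈ B, γ j * ε j) / ∑ j ∈ Bᶜ, γ j

theorem sub_mul_div_sub_lt_div {K : Type*} [Field K] [LinearOrder K] [IsStrictOrderedRing K]
    {N D w e : K} (hw : 0 < w) (hwD : w < D) (he : N / D < e) :
    (N - w * e) / (D - w) < N / D := by
  have hD : 0 < D := hw.trans hwD
  rw [div_lt_iff₀ hD] at he
  rw [div_lt_div_iff₀ (sub_pos.mpr hwD) hD]
  nlinarith [mul_lt_mul_of_pos_left he hw]

theorem alphaFactor_insert {P : ℕ} (γ ε : Fin P → ℝ) (C : ℝ) {B : Finset (Fin P)} {j : Fin P}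
    (hj : j ∉ B) :
    alphaFactor γ ε C (insert j B) =
      ((C - ∑ i ∈ B, γ i * ε i) - γ j * ε j) / (∑ i ∈ Bᶜ, γ i - γ j) := by
  rw [alphaFactor, Finset.sum_insert hj, Finset.compl_insert,
    Finset.sum_erase_eq_sub (Finset.mem_compl.mpr hj), sub_add_eq_sub_sub_swap]

theorem lt_sum_compl_of_two_le_card_compl {P : ℕ} {γ : Fin P → ℝ} (hγ : ∀ j, 0 < γ j)
    {B : Finset (Fin P)} (hB : 2 ≤ Bᶜ.card) {j : Fin P} (hj : j ∉ B) :
    γ j < ∑ i ∈ Bᶜ, γ i := by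
  obtain ⟨k, hk, hkj⟩ := Finset.exists_mem_ne (by omega : 1 < Bᶜ.card) j
  exact Finset.single_lt_sum hkj (Finset.mem_compl.mpr hj) hk (hγ k) fun i _ _ => (hγ i).le

theorem alphaFactor_insert_lt {P : ℕ} {γ : Fin P → ℝ} (ε : Fin P → ℝ) (C : ℝ)
    (hγ : ∀ j, 0 < γ j) {B : Finset (Fin P)} (hB : 2 ≤ Bᶜ.card) {j : Fin P} (hj : j ∉ B)
    (hεj : alphaFactor γ ε C B < ε j) :
    alphaFactor γ ε C (insert j B) < alphaFactor γ ε C B := by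
  rw [alphaFactor_insert γ ε C hj]
  exact sub_mul_div_sub_lt_div (hγ j) (lt_sum_compl_of_two_le_card_compl hγ hB hj) hεj

theorem lagrange_multipliers_remain_nonneg_general
    {P : ℕ} (γ ε η V : Fin P → ℝ) (C : ℝ)
    (hγ : ∀ j, 0 < γ j) (hε : ∀ j, 0 < ε j) (hη : ∀ j, 0 < η j)
    (hV : ∀ j, V j = η j / ε j)
    (B : Finset (Fin P)) (hBtwo : 2 ≤ Bᶜ.card)
    (hα : 0 < alphaFactor γ ε C B)
    (hdual : ∀ j ∈ B, alphaFactor γ ε C B ≤ ε j)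
    (j' : Fin P) (hj'B : j' ∉ B)
    (hviol : V j' < η j' / alphaFactor γ ε C B) :
    ∀ j ∈ insert j' B, alphaFactor γ ε C (insert j' B) ≤ ε j := by
  have hεj' : alphaFactor γ ε C B < ε j' := by
    rwa [hV, div_lt_div_iff_of_pos_left (hη j') (hε j') hα] at hviol
  have hdecrease := alphaFactor_insert_lt ε C hγ hBtwo hj'B hεj'
  intro j hj
  rcases Finset.mem_insert.mp hj with rfl | hjB
  · exact (hdecrease.trans hεj').le
  · exact hdecrease.le.trans (hdual j hjB)

/-- If all Lagrange multipliers of the active constraints are non-negative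
(`ε_j ≥ α(B)` for `j ∈ B`) and `j' ∉ B` has a violated constraint
(`η_{j'}/α(B) > V_{j'}`, equivalently `ε_{j'} > α(B)`), then after adding `j'` to the
working set the multipliers remain non-negative: `ε_j ≥ α(B ∪ {j'})` for all
`j ∈ B ∪ {j'}`. -/
theorem lagrange_multipliers_remain_nonneg
    {P : ℕ} (γ ε η V : Fin P → ℝ) (C : ℝ)
    (hγ : ∀ j, 0 < γ j) (hε : ∀ j, 0 < ε j) (hη : ∀ j, 0 < η j)
    (hV : ∀ j, V j = η j / ε j) (hC : 0 < C)
    (B : Finset (Fin P)) (hBtwo : 2 ≤ Bᶜ.card)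
    (hα : 0 < alphaFactor γ ε C B)
    (hdual : ∀ j ∈ B, alphaFactor γ ε C B ≤ ε j)
    (j' : Fin P) (hj'B : j' ∉ B)
    (hviol : V j' < η j' / alphaFactor γ ε C B) :
    ∀ j ∈ insert j' B, alphaFactor γ ε C (insert j' B) ≤ ε j :=
  lagrange_multipliers_remain_nonneg_general γ ε η V C hγ hε hη hV B hBtwo hα hdual j' hj'B hviol
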